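/- arXiv:math-ph/0501041 — 3 statements merged into one kernel-verified Lean document; each statement's English description precedes it below -/
import Mathlib

section
/- If the only element of the quotient subspace M comparable with 0 is 0 itself (i.e., C ∩ M = {0} and (−C) ∩ M = {0}), then: (i) M is an order ideal; (ii) the quotient positive cone [C] is proper ([C] ∩ (−[C]) = {[0]}); and (iii) the quotient partial order is antisymmetric. -/
/-!
Write `g ≤ f (mod M)` when `g ≤ f + h` for some `h ∈ M`; this relation is unchanged when `g` and
`f` are moved within their cosets. If `g ≤ f + h₁` and `f ≤ g + h₂`, then `0 ≤ h₁ + h₂ ∈ M`,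
so `h₁ + h₂ = 0`, which squeezes `g = f + h₁`. Hence `g ≡ f (mod M)`: the quotient order is
antisymmetric, and `M` is an order ideal because `a ≤ c ≤ b` with `a, b ∈ M` gives
`c ≤ 0 (mod M)` and `0 ≤ c (mod M)`.
-/

namespace AddSubgroup

variable {V : Type*} [AddCommGroup V] [PartialOrder V] [AddLeftMono V] (M : AddSubgroup V)

def LeModulo (g f : V) : Prop := ∃ h ∈ M, g ≤ f + h

variable {M}

theorem LeModulo.congr {g f g' f' : V} (hgf : M.LeModulo g f) (hg : g - g' ∈ M)
    (hf : f - f' ∈ M) : M.LeModulo g' f' := by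
  obtain ⟨h, hM, hle⟩ := hgf
  refine ⟨f - f' + h - (g - g'), M.sub_mem (M.add_mem hf hM) hg, ?_⟩
  calc g' = g - (g - g') := by abel
    _ ≤ f + h - (g - g') := by gcongr
    _ = f' + (f - f' + h - (g - g')) := by abel

theorem LeModulo.antisymm (hpos : ∀ h ∈ M, 0 ≤ h → h = 0) {g f : V}
    (hgf : M.LeModulo g f) (hfg : M.LeModulo f g) : g - f ∈ M := by
  obtain ⟨h₁, hM₁, hle₁⟩ := hgf
  obtain ⟨h₂, hM₂, hle₂⟩ := hfg
  have hsum : h₂ + h₁ = 0 := by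
    refine hpos _ (M.add_mem hM₂ hM₁) (le_of_add_le_add_left (a := g) ?_)
    calc g + 0 = g := add_zero g
      _ ≤ f + h₁ := hle₁
      _ ≤ g + h₂ + h₁ := by gcongr
      _ = g + (h₂ + h₁) := add_assoc g h₂ h₁
  have hge : f + h₁ ≤ g := by
    calc f + h₁ ≤ g + h₂ + h₁ := by gcongr
      _ = g := by rw [add_assoc, hsum, add_zero]
  rwa [le_antisymm hle₁ hge, add_sub_cancel_left]

theorem mem_of_le_of_le (hpos : ∀ h ∈ M, 0 ≤ h → h = 0) {a b c : V} (ha : a ∈ M) (hb : b ∈ M)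
    (hac : a ≤ c) (hcb : c ≤ b) : c ∈ M := by
  have hc0 : M.LeModulo c 0 := ⟨b, hb, by rwa [zero_add]⟩
  have h0c : M.LeModulo 0 c := ⟨-a, M.neg_mem ha, by rwa [← sub_eq_add_neg, sub_nonneg]⟩
  simpa using hc0.antisymm hpos h0c

end AddSubgroup

theorem quotient_order_antisymmetric_general
    (V : Type*) [NormedAddCommGroup V] [PartialOrder V]
    [CovariantClass V V (· + ·) (· ≤ ·)] [Module ℝ V]
    (M : Submodule ℝ V)
    (hpos : ∀ h : V, h ∈ M → 0 ≤ h → h = 0) :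
    let τ : V → V ⧸ M := M.mkQ
    -- the quotient order
    let QLE : V ⧸ M → V ⧸ M → Prop :=
      fun ξ ζ => ∃ g f : V, τ g = ξ ∧ τ f = ζ ∧ ∃ h ∈ M, g ≤ f + h
    -- (i) M is an order ideal
    (∀ a b c : V, a ∈ M → b ∈ M → a ≤ c → c ≤ b → c ∈ M) ∧
    -- (ii) the quotient positive cone is proper
    (∀ ξ : V ⧸ M, QLE (τ 0) ξ → QLE ξ (τ 0) → ξ = τ 0) ∧
    -- (iii) the quotient order is antisymmetric
    (∀ ξ ζ : V ⧸ M, QLE ξ ζ → QLE ζ ξ → ξ = ζ) := by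
  intro τ QLE
  have antisymm : ∀ ξ ζ : V ⧸ M, QLE ξ ζ → QLE ζ ξ → ξ = ζ := by
    rintro ξ ζ ⟨g, f, rfl, rfl, hgf⟩ ⟨f', g', hf', hg', hfg⟩
    have hfg' : M.toAddSubgroup.LeModulo f g :=
      AddSubgroup.LeModulo.congr hfg ((Submodule.Quotient.eq M).mp hf')
        ((Submodule.Quotient.eq M).mp hg')
    exact (Submodule.Quotient.eq M).mpr
      (AddSubgroup.LeModulo.antisymm (M := M.toAddSubgroup) hpos hgf hfg')
  exact ⟨fun a b c => AddSubgroup.mem_of_le_of_le (M := M.toAddSubgroup) hpos, fun ξ h0ξ hξ0 => antisymm _ _ hξ0 h0ξ,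
    antisymm⟩

/-- If the only element of the subspace `M` comparable with `0` is `0` itself
(`C ∩ M = {0}` and `(−C) ∩ M = {0}`), then: (i) `M` is an order ideal;
(ii) the quotient positive cone is proper; and (iii) the quotient partial
order, defined by `[g] ≤ [f]` iff `g ≤ f + h` for some `h ∈ M`,
is antisymmetric. -/
theorem quotient_order_antisymmetric
    (V : Type*) [NormedAddCommGroup V] [PartialOrder V]
    [CovariantClass V V (· + ·) (· ≤ ·)] [Module ℝ V]
    (M : Submodule ℝ V) (hMclosed : IsClosed (M : Set V))
    (hpos : ∀ h : V, h ∈ M → 0 ≤ h → h = 0)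
    (hneg : ∀ h : V, h ∈ M → h ≤ 0 → h = 0) :
    let τ : V → V ⧸ M := M.mkQ
    -- the quotient order
    let QLE : V ⧸ M → V ⧸ M → Prop :=
      fun ξ ζ => ∃ g f : V, τ g = ξ ∧ τ f = ζ ∧ ∃ h ∈ M, g ≤ f + h
    -- (i) M is an order ideal
    (∀ a b c : V, a ∈ M → b ∈ M → a ≤ c → c ≤ b → c ∈ M) ∧
    -- (ii) the quotient positive cone is proper
    (∀ ξ : V ⧸ M, QLE (τ 0) ξ → QLE ξ (τ 0) → ξ = τ 0) ∧
    -- (iii) the quotient order is antisymmetric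
    (∀ ξ ζ : V ⧸ M, QLE ξ ζ → QLE ζ ξ → ξ = ζ) :=
  quotient_order_antisymmetric_general V M hpos
end

section
/- For a compact convex subset K of a locally convex space, the Kadison map Δ sending an element f of an Archimedean order-unit space V (with state space K) to the affine function φ ↦ φ(f) on K is a linear isometry with respect to the order-unit norm, order-preserving in both directions, onto a dense subspace of the space A(K) of continuous affine functions on K, with Δ(e) the constant function 1. -/
set_option linter.unusedSectionVars false

open Set

namespace KadisonAux

variable {V : Type*} [AddCommGroup V] [PartialOrder V]
    [CovariantClass V V (· + ·) (· ≤ ·)] [Module ℝ V] [PosSMulMono ℝ V]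

/-- the one-sided gauge -/
noncomputable def kN (e f : V) : ℝ := sInf {b : ℝ | f ≤ b • e}

theorem e_nonneg {e : V}
    (hunit : ∀ f : V, ∃ b : ℝ, 0 < b ∧ -(b • e) ≤ f ∧ f ≤ b • e) : 0 ≤ e := by
  obtain ⟨b, hb, h1, _⟩ := hunit e
  have h2 : 0 ≤ e + b • e := neg_le_iff_add_nonneg.mp h1
  have h3 : e + b • e = (1 + b) • e := by rw [add_smul, one_smul]
  have h4 : (0:ℝ) ≤ (1 + b)⁻¹ := by positivity
  have := smul_le_smul_of_nonneg_left (h3 ▸ h2) h4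
  rwa [smul_zero, smul_smul, inv_mul_cancel₀ (by positivity), one_smul] at this

theorem smul_e_le (e : V) {a b : ℝ} (h0 : 0 ≤ e) (hab : a ≤ b) : a • e ≤ b • e := by
  have : 0 ≤ (b - a) • e := by
    have := smul_le_smul_of_nonneg_left h0 (sub_nonneg.mpr hab)
    rwa [smul_zero] at this
  have := add_le_add_left this (a • e)
  rwa [zero_add, ← add_smul, sub_add_cancel] at this

/-- positivity of the coefficient from positivity of the multiple -/
theorem coeff_nonneg {e : V} (he : e ≠ 0)
    (h0 : 0 ≤ e) {t : ℝ} (ht : 0 ≤ t • e) : 0 ≤ t := by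
  by_contra h
  push_neg at h
  have h1 : (-t)⁻¹ • ((-t) • e) ≤ (-t)⁻¹ • (0:V) := by
    refine smul_le_smul_of_nonneg_left ?_ (le_of_lt (inv_pos.mpr (by linarith)))
    rw [neg_smul, neg_le, neg_zero]; exact ht
  rw [smul_zero, smul_smul, inv_mul_cancel₀ (by intro h2; simp at h2; linarith), one_smul] at h1
  exact he (le_antisymm h1 h0)

theorem coeff_le {e : V} (he : e ≠ 0) (h0 : 0 ≤ e) {a b : ℝ}
    (h : a • e ≤ b • e) : a ≤ b := by
  have : 0 ≤ (b - a) • e := by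
    rw [sub_smul]; rwa [← sub_nonneg] at h
  linarith [coeff_nonneg he h0 this]
section N
variable {e : V}

theorem setN_nonempty (hunit : ∀ f : V, ∃ b : ℝ, 0 < b ∧ -(b • e) ≤ f ∧ f ≤ b • e)
    (f : V) : {b : ℝ | f ≤ b • e}.Nonempty := by
  obtain ⟨b, _, _, h2⟩ := hunit f; exact ⟨b, h2⟩

theorem setN_bddBelow (hunit : ∀ f : V, ∃ b : ℝ, 0 < b ∧ -(b • e) ≤ f ∧ f ≤ b • e)
    (he : e ≠ 0) (f : V) : BddBelow {b : ℝ | f ≤ b • e} := by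
  obtain ⟨c, _, h1, _⟩ := hunit f
  refine ⟨-c, fun b hb => ?_⟩
  have h3 : (-c) • e ≤ b • e := by
    rw [neg_smul]; exact le_trans h1 hb
  exact coeff_le he (e_nonneg hunit) h3

theorem setN_upward (hunit : ∀ f : V, ∃ b : ℝ, 0 < b ∧ -(b • e) ≤ f ∧ f ≤ b • e)
    (f : V) {b c : ℝ} (hb : f ≤ b • e) (hbc : b ≤ c) : f ≤ c • e :=
  le_trans hb (smul_e_le e (e_nonneg hunit) hbc)

theorem le_kN_smul (hunit : ∀ f : V, ∃ b : ℝ, 0 < b ∧ -(b • e) ≤ f ∧ f ≤ b • e)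
    (harch : ∀ f : V, (∀ n : ℕ, (n : ℝ) • f ≤ e) → f ≤ 0)
    (f : V) : f ≤ kN e f • e := by
  set m := kN e f with hm
  have key : f - m • e ≤ 0 := by
    apply harch
    intro n
    rcases Nat.eq_zero_or_pos n with hn | hn
    · subst hn; rw [Nat.cast_zero, zero_smul]; exact e_nonneg hunit
    · have hnpos : (0:ℝ) < n := by exact_mod_cast hn
      have h1 : m < m + 1 / n := by linarith [one_div_pos.mpr hnpos]
      obtain ⟨b, hb, hblt⟩ :=
        exists_lt_of_csInf_lt (setN_nonempty hunit f)
          (show sInf {b : ℝ | f ≤ b • e} < m + 1/n from hm ▸ h1)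
      have h2 : f ≤ (m + 1/n) • e := setN_upward hunit f hb hblt.le
      have h3 : f - m • e ≤ ((n:ℝ))⁻¹ • e := by
        have := sub_le_sub_right h2 (m • e)
        rw [← sub_smul, add_sub_cancel_left] at this
        rwa [one_div] at this
      have h4 := smul_le_smul_of_nonneg_left h3 hnpos.le
      rwa [smul_smul, mul_inv_cancel₀ (ne_of_gt hnpos), one_smul] at h4
  exact sub_nonpos.mp key

theorem kN_le_iff (hunit : ∀ f : V, ∃ b : ℝ, 0 < b ∧ -(b • e) ≤ f ∧ f ≤ b • e)
    (harch : ∀ f : V, (∀ n : ℕ, (n : ℝ) • f ≤ e) → f ≤ 0) (he : e ≠ 0)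
    (f : V) {b : ℝ} : kN e f ≤ b ↔ f ≤ b • e := by
  constructor
  · intro h; exact setN_upward hunit f (le_kN_smul hunit harch f) h
  · intro h; exact csInf_le (setN_bddBelow hunit he f) h

theorem kN_zero (hunit : ∀ f : V, ∃ b : ℝ, 0 < b ∧ -(b • e) ≤ f ∧ f ≤ b • e)
    (harch : ∀ f : V, (∀ n : ℕ, (n : ℝ) • f ≤ e) → f ≤ 0) (he : e ≠ 0) :
    kN e (0 : V) = 0 := by
  refine le_antisymm ((kN_le_iff hunit harch he 0).mpr (by rw [zero_smul])) ?_
  exact coeff_nonneg he (e_nonneg hunit) (le_kN_smul hunit harch 0)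

theorem kN_add (hunit : ∀ f : V, ∃ b : ℝ, 0 < b ∧ -(b • e) ≤ f ∧ f ≤ b • e)
    (harch : ∀ f : V, (∀ n : ℕ, (n : ℝ) • f ≤ e) → f ≤ 0) (he : e ≠ 0)
    (f g : V) : kN e (f + g) ≤ kN e f + kN e g := by
  rw [kN_le_iff hunit harch he, add_smul]
  exact add_le_add (le_kN_smul hunit harch f) (le_kN_smul hunit harch g)

theorem kN_pos_smul (hunit : ∀ f : V, ∃ b : ℝ, 0 < b ∧ -(b • e) ≤ f ∧ f ≤ b • e)
    (harch : ∀ f : V, (∀ n : ℕ, (n : ℝ) • f ≤ e) → f ≤ 0) (he : e ≠ 0)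
    {c : ℝ} (hc : 0 < c) (f : V) : kN e (c • f) = c * kN e f := by
  refine le_antisymm ?_ ?_
  · rw [kN_le_iff hunit harch he, mul_smul]
    exact smul_le_smul_of_nonneg_left (le_kN_smul hunit harch f) hc.le
  · have h1 : kN e f ≤ c⁻¹ * kN e (c • f) := by
      rw [kN_le_iff hunit harch he, mul_smul]
      have h2 := smul_le_smul_of_nonneg_left (le_kN_smul hunit harch (c • f))
        (le_of_lt (inv_pos.mpr hc))
      rwa [smul_smul, inv_mul_cancel₀ (ne_of_gt hc), one_smul] at h2
    have h3 := mul_le_mul_of_nonneg_left h1 hc.le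
    rwa [← mul_assoc, mul_inv_cancel₀ (ne_of_gt hc), one_mul] at h3

theorem kN_add_neg_nonneg (hunit : ∀ f : V, ∃ b : ℝ, 0 < b ∧ -(b • e) ≤ f ∧ f ≤ b • e)
    (harch : ∀ f : V, (∀ n : ℕ, (n : ℝ) • f ≤ e) → f ≤ 0) (he : e ≠ 0)
    (f : V) : 0 ≤ kN e f + kN e (-f) := by
  have h1 := kN_add hunit harch he f (-f)
  rw [add_neg_cancel, kN_zero hunit harch he] at h1
  linarith

theorem kN_e (hunit : ∀ f : V, ∃ b : ℝ, 0 < b ∧ -(b • e) ≤ f ∧ f ≤ b • e)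
    (harch : ∀ f : V, (∀ n : ℕ, (n : ℝ) • f ≤ e) → f ≤ 0) (he : e ≠ 0) :
    kN e e = 1 := by
  refine le_antisymm ((kN_le_iff hunit harch he e).mpr (by rw [one_smul])) ?_
  have h1 := le_kN_smul hunit harch e
  nth_rewrite 1 [← one_smul ℝ e] at h1
  exact coeff_le he (e_nonneg hunit) h1

theorem kN_neg_e (hunit : ∀ f : V, ∃ b : ℝ, 0 < b ∧ -(b • e) ≤ f ∧ f ≤ b • e)
    (harch : ∀ f : V, (∀ n : ℕ, (n : ℝ) • f ≤ e) → f ≤ 0) (he : e ≠ 0) :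
    kN e (-e) = -1 := by
  refine le_antisymm ((kN_le_iff hunit harch he (-e)).mpr (by rw [neg_smul, one_smul])) ?_
  have h1 := le_kN_smul hunit harch (-e)
  have h2 : (-1 : ℝ) • e ≤ kN e (-e) • e := by rwa [neg_smul, one_smul]
  exact coeff_le he (e_nonneg hunit) h2

theorem kN_nonpos_iff (hunit : ∀ f : V, ∃ b : ℝ, 0 < b ∧ -(b • e) ≤ f ∧ f ≤ b • e)
    (harch : ∀ f : V, (∀ n : ℕ, (n : ℝ) • f ≤ e) → f ≤ 0) (he : e ≠ 0)
    (f : V) : f ≤ 0 ↔ kN e f ≤ 0 := by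
  rw [kN_le_iff hunit harch he, zero_smul]

theorem exists_dominated_ne (hunit : ∀ f : V, ∃ b : ℝ, 0 < b ∧ -(b • e) ≤ f ∧ f ≤ b • e)
    (harch : ∀ f : V, (∀ n : ℕ, (n : ℝ) • f ≤ e) → f ≤ 0) (he : e ≠ 0)
    (h : V) (hne : h ≠ 0) :
    ∃ φ : V →ₗ[ℝ] ℝ, (∀ g, φ g ≤ kN e g) ∧ φ h = kN e h := by
  have H : ∀ c : ℝ, c • h = (0 : V) → c • (kN e h) = 0 := by
    intro c hc
    rcases eq_or_ne c 0 with rfl | hcne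
    · rw [zero_smul]
    · exfalso; apply hne
      have : c⁻¹ • (c • h) = c⁻¹ • (0 : V) := by rw [hc]
      rwa [smul_smul, inv_mul_cancel₀ hcne, one_smul, smul_zero] at this
  set f0 := LinearPMap.mkSpanSingleton' (σ := RingHom.id ℝ) h (kN e h) H with hf0
  have hmem : h ∈ f0.domain := by
    rw [hf0, LinearPMap.domain_mkSpanSingleton]
    exact Submodule.mem_span_singleton_self h
  have hf : ∀ x : f0.domain, f0 x ≤ kN e x := by
    rintro ⟨x, hx⟩
    have hx' : x ∈ (Submodule.span ℝ {h}) := by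
      rwa [hf0, LinearPMap.domain_mkSpanSingleton] at hx
    obtain ⟨c, rfl⟩ := Submodule.mem_span_singleton.mp hx'
    rw [LinearPMap.mkSpanSingleton'_apply]
    show c • kN e h ≤ kN e (c • h)
    rcases lt_trichotomy c 0 with hc | rfl | hc
    · have hsum := kN_add_neg_nonneg hunit harch he h
      have h2 : kN e (c • h) = (-c) * kN e (-h) := by
        rw [show c • h = (-c) • (-h) by rw [neg_smul_neg]]
        exact kN_pos_smul hunit harch he (by linarith) (-h)
      rw [h2, smul_eq_mul]
      nlinarith [mul_nonneg (by linarith : (0:ℝ) ≤ -c) hsum]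
    · rw [zero_smul, zero_smul, kN_zero hunit harch he]
    · rw [kN_pos_smul hunit harch he hc, smul_eq_mul]
  obtain ⟨g, hg1, hg2⟩ := exists_extension_of_le_sublinear f0 (fun x => kN e x)
    (fun c hc x => kN_pos_smul hunit harch he hc x)
    (kN_add hunit harch he) hf
  refine ⟨g, hg2, ?_⟩
  have h5 := hg1 ⟨h, hmem⟩
  exact h5.trans (LinearPMap.mkSpanSingleton'_apply_self _ _ _ _)

theorem exists_dominated (hunit : ∀ f : V, ∃ b : ℝ, 0 < b ∧ -(b • e) ≤ f ∧ f ≤ b • e)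
    (harch : ∀ f : V, (∀ n : ℕ, (n : ℝ) • f ≤ e) → f ≤ 0) (he : e ≠ 0)
    (h : V) :
    ∃ φ : V →ₗ[ℝ] ℝ, (∀ g, φ g ≤ kN e g) ∧ φ h = kN e h := by
  rcases eq_or_ne h 0 with rfl | hne
  · obtain ⟨φ, hφ, -⟩ := exists_dominated_ne hunit harch he e he
    exact ⟨φ, hφ, by rw [map_zero, kN_zero hunit harch he]⟩
  · exact exists_dominated_ne hunit harch he h hne

theorem dominated_is_state (hunit : ∀ f : V, ∃ b : ℝ, 0 < b ∧ -(b • e) ≤ f ∧ f ≤ b • e)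
    (harch : ∀ f : V, (∀ n : ℕ, (n : ℝ) • f ≤ e) → f ≤ 0) (he : e ≠ 0)
    (φ : V →ₗ[ℝ] ℝ) (hd : ∀ g, φ g ≤ kN e g) :
    IsLinearMap ℝ (⇑φ) ∧ (∀ f : V, 0 ≤ f → 0 ≤ φ f) ∧ φ e = 1 := by
  refine ⟨φ.isLinear, fun f hf => ?_, ?_⟩
  · have h1 := hd (-f)
    rw [map_neg] at h1
    have h2 : kN e (-f) ≤ 0 :=
      (kN_nonpos_iff hunit harch he (-f)).mp (neg_nonpos.mpr hf)
    linarith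
  · have h1 := hd e
    rw [kN_e hunit harch he] at h1
    have h2 := hd (-e)
    rw [map_neg, kN_neg_e hunit harch he] at h2
    linarith

theorem state_le_kN (hunit : ∀ f : V, ∃ b : ℝ, 0 < b ∧ -(b • e) ≤ f ∧ f ≤ b • e)
    (harch : ∀ f : V, (∀ n : ℕ, (n : ℝ) • f ≤ e) → f ≤ 0)
    (φ : V → ℝ) (hlin : IsLinearMap ℝ φ) (hpos : ∀ f : V, 0 ≤ f → 0 ≤ φ f)
    (hone : φ e = 1) (f : V) : φ f ≤ kN e f := by
  set L := IsLinearMap.mk' φ hlin with hL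
  have h1 : (0 : V) ≤ kN e f • e - f := sub_nonneg.mpr (le_kN_smul hunit harch f)
  have h2 := hpos _ h1
  have h3 : φ (kN e f • e - f) = kN e f * φ e - φ f := by
    rw [show φ (kN e f • e - f) = L (kN e f • e - f) from rfl, map_sub, map_smul,
      smul_eq_mul]
    rfl
  rw [h3, hone, mul_one] at h2
  linarith

end N

theorem pi_clm_exists_finset {ι : Type*} (ℓ : ((ι → ℝ)) →L[ℝ] ℝ) :
    ∃ S : Finset ι, ∀ x : ι → ℝ, (∀ i ∈ S, x i = 0) → ℓ x = 0 := by
  have h0 : ℓ ⁻¹' Ioo (-1 : ℝ) 1 ∈ nhds (0 : ι → ℝ) := by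
    apply ℓ.continuous.continuousAt.preimage_mem_nhds
    rw [map_zero]
    exact Ioo_mem_nhds (by norm_num) (by norm_num)
  rw [nhds_pi, Filter.mem_pi] at h0
  obtain ⟨I, hIfin, t, ht, hsub⟩ := h0
  refine ⟨hIfin.toFinset, fun x hx => ?_⟩
  have key : ∀ c : ℝ, ℓ (c • x) ∈ Ioo (-1:ℝ) 1 := by
    intro c
    apply hsub
    intro i hi
    have hxi : x i = 0 := hx i (hIfin.mem_toFinset.mpr hi)
    show (c • x) i ∈ t i
    rw [Pi.smul_apply, hxi, smul_zero]
    exact mem_of_mem_nhds (ht i)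
  by_contra hne
  have h2 := key (2 / ℓ x)
  rw [map_smul, smul_eq_mul, div_mul_cancel₀ 2 hne] at h2
  have := h2.2
  norm_num at this

theorem clm_repr {V : Type*} [AddCommGroup V] [Module ℝ V]
    (ℓ : ((V → ℝ)) →L[ℝ] ℝ) :
    ∃ f₁ : V, ∀ φ : V → ℝ, IsLinearMap ℝ φ → ℓ φ = φ f₁ := by
  classical
  obtain ⟨S, hS⟩ := pi_clm_exists_finset ℓ
  refine ⟨∑ i ∈ S, ℓ (Pi.single i (1:ℝ) : V → ℝ) • i, fun φ hφ => ?_⟩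
  set y : V → ℝ := ∑ i ∈ S, φ i • (Pi.single i (1:ℝ) : V → ℝ) with hy
  have hvan : ∀ i ∈ S, (φ - y) i = 0 := by
    intro j hj
    have hyj : y j = φ j := by
      rw [hy, Finset.sum_apply]
      rw [Finset.sum_eq_single j]
      · rw [Pi.smul_apply, Pi.single_eq_same, smul_eq_mul, mul_one]
      · intro i _ hij
        rw [Pi.smul_apply, Pi.single_eq_of_ne (Ne.symm hij), smul_zero]
      · intro h; exact absurd hj h
    rw [Pi.sub_apply, hyj, sub_self]
  have h1 : ℓ (φ - y) = 0 := hS _ hvan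
  rw [map_sub, sub_eq_zero] at h1
  rw [h1]
  have h2 : ℓ y = ∑ i ∈ S, φ i * ℓ (Pi.single i (1:ℝ) : V → ℝ) := by
    rw [hy, map_sum]
    exact Finset.sum_congr rfl fun i _ => by rw [map_smul, smul_eq_mul]
  set L := IsLinearMap.mk' φ hφ with hL
  have h3 : φ (∑ i ∈ S, ℓ (Pi.single i (1:ℝ) : V → ℝ) • i)
      = ∑ i ∈ S, ℓ (Pi.single i (1:ℝ) : V → ℝ) * φ i := by
    show L (∑ i ∈ S, ℓ (Pi.single i (1:ℝ) : V → ℝ) • i) = _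
    rw [map_sum]
    exact Finset.sum_congr rfl fun i _ => by rw [map_smul, smul_eq_mul]; rfl
  rw [h2, h3]
  exact Finset.sum_congr rfl fun i _ => mul_comm _ _

def stateSet (e : V) : Set (V → ℝ) :=
  {φ | IsLinearMap ℝ φ ∧ (∀ f : V, 0 ≤ f → 0 ≤ φ f) ∧ φ e = 1}

theorem isClosed_stateSet (e : V) : IsClosed (stateSet e) := by
  have h1 : stateSet e =
      ({φ : V → ℝ | ∀ x y : V, φ (x + y) = φ x + φ y} ∩
       {φ : V → ℝ | ∀ (c : ℝ) (x : V), φ (c • x) = c • φ x}) ∩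
      ({φ : V → ℝ | ∀ f : V, 0 ≤ f → 0 ≤ φ f} ∩ {φ : V → ℝ | φ e = 1}) := by
    ext φ
    constructor
    · rintro ⟨⟨hadd, hsmul⟩, hpos, hone⟩; exact ⟨⟨hadd, hsmul⟩, hpos, hone⟩
    · rintro ⟨⟨hadd, hsmul⟩, hpos, hone⟩; exact ⟨⟨hadd, hsmul⟩, hpos, hone⟩
  rw [h1]
  refine IsClosed.inter (IsClosed.inter ?_ ?_) (IsClosed.inter ?_ ?_)
  · have h2 : {φ : V → ℝ | ∀ x y : V, φ (x + y) = φ x + φ y} =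
        ⋂ (x) (y), {φ : V → ℝ | φ (x + y) = φ x + φ y} := by ext φ; simp
    rw [h2]
    exact isClosed_iInter fun x => isClosed_iInter fun y =>
      isClosed_eq (continuous_apply _) ((continuous_apply x).add (continuous_apply y))
  · have h2 : {φ : V → ℝ | ∀ (c : ℝ) (x : V), φ (c • x) = c • φ x} =
        ⋂ (c : ℝ) (x : V), {φ : V → ℝ | φ (c • x) = c • φ x} := by ext φ; simp
    rw [h2]
    exact isClosed_iInter fun c => isClosed_iInter fun x =>
      isClosed_eq (continuous_apply _) ((continuous_apply _).const_smul c)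
  · have h2 : {φ : V → ℝ | ∀ f : V, 0 ≤ f → 0 ≤ φ f} =
        ⋂ (f : V) (_ : 0 ≤ f), {φ : V → ℝ | 0 ≤ φ f} := by ext φ; simp
    rw [h2]
    exact isClosed_iInter fun f => isClosed_iInter fun _ =>
      isClosed_le continuous_const (continuous_apply f)
  · exact isClosed_eq (continuous_apply e) continuous_const

theorem isCompact_stateSet {e : V}
    (hunit : ∀ f : V, ∃ b : ℝ, 0 < b ∧ -(b • e) ≤ f ∧ f ≤ b • e)
    (harch : ∀ f : V, (∀ n : ℕ, (n : ℝ) • f ≤ e) → f ≤ 0) :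
    IsCompact (stateSet e) := by
  refine IsCompact.of_isClosed_subset
    (isCompact_univ_pi fun f => isCompact_Icc (a := -(kN e (-f))) (b := kN e f))
    (isClosed_stateSet e) ?_
  rintro φ ⟨hlin, hpos, hone⟩ 
  intro f _
  constructor
  · have h1 := state_le_kN hunit harch φ hlin hpos hone (-f)
    have h2 : φ (-f) = -φ f := by
      show (IsLinearMap.mk' φ hlin) (-f) = -((IsLinearMap.mk' φ hlin) f)
      rw [map_neg]
    rw [h2] at h1
    linarith
  · exact state_le_kN hunit harch φ hlin hpos hone f

theorem stateSet_convex_mem (e : V) {φ ψ : V → ℝ}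
    (hφ : φ ∈ stateSet e) (hψ : ψ ∈ stateSet e)
    {a b : ℝ} (ha : 0 ≤ a) (hb : 0 ≤ b) (hab : a + b = 1) :
    a • φ + b • ψ ∈ stateSet e := by
  obtain ⟨hφl, hφp, hφe⟩ := hφ
  obtain ⟨hψl, hψp, hψe⟩ := hψ
  refine ⟨⟨fun x y => ?_, fun c x => ?_⟩, fun f hf => ?_, ?_⟩
  · simp only [Pi.add_apply, Pi.smul_apply, smul_eq_mul, hφl.map_add, hψl.map_add]
    ring
  · simp only [Pi.add_apply, Pi.smul_apply, smul_eq_mul, hφl.map_smul, hψl.map_smul]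
    ring
  · simp only [Pi.add_apply, Pi.smul_apply, smul_eq_mul]
    exact add_nonneg (mul_nonneg ha (hφp f hf)) (mul_nonneg hb (hψp f hf))
  · simp only [Pi.add_apply, Pi.smul_apply, smul_eq_mul, hφe, hψe]
    linarith

end KadisonAux

/-- Kadison's functional representation: for an Archimedean ordered vector
space `(V, e)` with order unit `e` and order-unit norm `p`, the map
`Δ : f ↦ (φ ↦ φ f)` into functions on the state space `K` (with the weak*,
i.e. pointwise, topology) is linear, a `p`-isometry (for the sup norm on
`K`), order-preserving in both directions, has image the continuous affine
functions on `K` up to uniform density, and sends `e` to the constant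
function `1`. -/
theorem kadison_functional_representation
    (V : Type*) [AddCommGroup V] [PartialOrder V]
    [CovariantClass V V (· + ·) (· ≤ ·)] [Module ℝ V] [PosSMulMono ℝ V]
    (e : V)
    (hunit : ∀ f : V, ∃ b : ℝ, 0 < b ∧ -(b • e) ≤ f ∧ f ≤ b • e)
    (harch : ∀ f : V, (∀ n : ℕ, (n : ℝ) • f ≤ e) → f ≤ 0) :
    -- the order-unit norm
    let p : V → ℝ := fun f => sInf {b : ℝ | 0 < b ∧ -(b • e) ≤ f ∧ f ≤ b • e}
    -- the state space, as a subset of `V → ℝ` with the topology of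
    -- pointwise (weak*) convergence
    let K : Set (V → ℝ) :=
      {φ | IsLinearMap ℝ φ ∧ (∀ f : V, 0 ≤ f → 0 ≤ φ f) ∧ φ e = 1}
    -- the Kadison map
    let Δ : V → (K → ℝ) := fun f φ => (φ : V → ℝ) f
    -- linearity
    (∀ f g : V, Δ (f + g) = Δ f + Δ g) ∧
    (∀ (a : ℝ) (f : V), Δ (a • f) = a • Δ f) ∧
    -- isometry with respect to the order-unit norm and the sup norm on K
    (∀ f : V, sSup {x : ℝ | ∃ φ : K, x = |Δ f φ|} = p f) ∧
    -- order-preserving in both directions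
    (∀ f g : V, f ≤ g ↔ ∀ φ : K, Δ f φ ≤ Δ g φ) ∧
    -- the image consists of continuous affine functions ...
    (∀ f : V, Continuous (Δ f)) ∧
    (∀ (f : V) (φ ψ χ : K) (a : ℝ), 0 ≤ a → a ≤ 1 →
        (χ : V → ℝ) = a • (φ : V → ℝ) + (1 - a) • (ψ : V → ℝ) →
        Δ f χ = a * Δ f φ + (1 - a) * Δ f ψ) ∧
    -- ... and is uniformly dense among them
    (∀ g : K → ℝ, Continuous g →
        (∀ (φ ψ χ : K) (a : ℝ), 0 ≤ a → a ≤ 1 →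
          (χ : V → ℝ) = a • (φ : V → ℝ) + (1 - a) • (ψ : V → ℝ) →
          g χ = a * g φ + (1 - a) * g ψ) →
        ∀ ε : ℝ, 0 < ε → ∃ f : V, ∀ φ : K, |g φ - Δ f φ| ≤ ε) ∧
    -- Δ e is the constant function 1
    (∀ φ : K, Δ e φ = 1) := by
  
  intro p K Δ
  have hΔadd : ∀ f g : V, Δ (f + g) = Δ f + Δ g := by
    intro f g; funext φ; exact φ.2.1.map_add f g
  have hΔsmul : ∀ (a : ℝ) (f : V), Δ (a • f) = a • Δ f := by
    intro a f; funext φ; exact φ.2.1.map_smul a f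
  have hΔcont : ∀ f : V, Continuous (Δ f) := fun f =>
    (continuous_apply f).comp continuous_subtype_val
  have hΔaff : ∀ (f : V) (φ ψ χ : K) (a : ℝ), 0 ≤ a → a ≤ 1 →
      (χ : V → ℝ) = a • (φ : V → ℝ) + (1 - a) • (ψ : V → ℝ) →
      Δ f χ = a * Δ f φ + (1 - a) * Δ f ψ := by
    intro f φ ψ χ a _ _ hχ
    show (χ : V → ℝ) f = a * (φ : V → ℝ) f + (1 - a) * (ψ : V → ℝ) f
    rw [hχ]
    simp [Pi.add_apply, Pi.smul_apply, smul_eq_mul]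
  have hΔe : ∀ φ : K, Δ e φ = 1 := fun φ => φ.2.2.2
  by_cases he : e = 0
  · -- degenerate case : V is trivial and K is empty
    have hall : ∀ f : V, f = 0 := by
      intro f
      obtain ⟨b, _, h1, h2⟩ := hunit f
      rw [he, smul_zero] at h1 h2
      rw [neg_zero] at h1
      exact le_antisymm h2 h1
    haveI : IsEmpty K := by
      constructor
      rintro ⟨φ, hlin, _, hone⟩
      have h0 : φ (0 : V) = 0 := hlin.map_zero
      rw [he, h0] at hone
      exact zero_ne_one hone
    refine ⟨hΔadd, hΔsmul, ?_, ?_, hΔcont, hΔaff, ?_, hΔe⟩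
    · intro f
      have hS : {x : ℝ | ∃ φ : K, x = |Δ f φ|} = ∅ :=
        Set.eq_empty_of_forall_notMem (by rintro x ⟨φ, -⟩; exact isEmptyElim φ)
      rw [hS, Real.sSup_empty]
      show (0 : ℝ) = sInf {b : ℝ | 0 < b ∧ -(b • e) ≤ f ∧ f ≤ b • e}
      have hset : {b : ℝ | 0 < b ∧ -(b • e) ≤ f ∧ f ≤ b • e} = Set.Ioi 0 := by
        ext b
        simp [he, hall f, Set.mem_Ioi]
      rw [hset, csInf_Ioi]
    · intro f g
      constructor
      · intro _ φ; exact isEmptyElim φ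
      · intro _; exact le_of_eq (by rw [hall f, hall g])
    · intro g _ _ ε _
      exact ⟨0, fun φ => isEmptyElim φ⟩
  · -- main case
    have hKs : K = KadisonAux.stateSet e := rfl
    refine ⟨hΔadd, hΔsmul, ?_, ?_, hΔcont, hΔaff, ?_, hΔe⟩
    · -- isometry
      intro f
      set m := max (KadisonAux.kN e f) (KadisonAux.kN e (-f)) with hm
      have hsum := KadisonAux.kN_add_neg_nonneg hunit harch he f
      have hm0 : 0 ≤ m := by
        have h1 := le_max_left (KadisonAux.kN e f) (KadisonAux.kN e (-f))
        have h2 := le_max_right (KadisonAux.kN e f) (KadisonAux.kN e (-f))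
        rw [← hm] at h1 h2
        linarith
      have hpf : p f = m := by
        show sInf {b : ℝ | 0 < b ∧ -(b • e) ≤ f ∧ f ≤ b • e} = m
        have hset : {b : ℝ | 0 < b ∧ -(b • e) ≤ f ∧ f ≤ b • e}
            = {b : ℝ | 0 < b ∧ m ≤ b} := by
          ext b
          simp only [Set.mem_setOf_eq, hm, max_le_iff]
          constructor
          · rintro ⟨hb, h1, h2⟩
            exact ⟨hb, (KadisonAux.kN_le_iff hunit harch he f).mpr h2,
              (KadisonAux.kN_le_iff hunit harch he (-f)).mpr (neg_le.mp h1)⟩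
          · rintro ⟨hb, h1, h2⟩
            exact ⟨hb, neg_le.mp ((KadisonAux.kN_le_iff hunit harch he (-f)).mp h2),
              (KadisonAux.kN_le_iff hunit harch he f).mp h1⟩
        rw [hset]
        rcases eq_or_lt_of_le hm0 with heq | hlt
        · rw [← heq]
          have h3 : {b : ℝ | 0 < b ∧ (0:ℝ) ≤ b} = Set.Ioi 0 := by
            ext b; simp [Set.mem_Ioi]; intro h; exact h.le
          rw [h3, csInf_Ioi]
        · have h3 : {b : ℝ | 0 < b ∧ m ≤ b} = Set.Ici m := by
            ext b
            constructor
            · rintro ⟨-, h⟩; exact h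
            · intro h; exact ⟨lt_of_lt_of_le hlt h, h⟩
          rw [h3, csInf_Ici]
      rw [hpf]
      obtain ⟨φL, hφd, hφf⟩ := KadisonAux.exists_dominated hunit harch he f
      obtain ⟨ψL, hψd, hψf⟩ := KadisonAux.exists_dominated hunit harch he (-f)
      have hφK : ⇑φL ∈ K := KadisonAux.dominated_is_state hunit harch he φL hφd
      have hψK : ⇑ψL ∈ K := KadisonAux.dominated_is_state hunit harch he ψL hψd
      have hbound : ∀ x ∈ {x : ℝ | ∃ φ : K, x = |Δ f φ|}, x ≤ m := by
        rintro x ⟨φ, rfl⟩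
        obtain ⟨hlin, hpos, hone⟩ := φ.2
        have h1 : (φ : V → ℝ) f ≤ KadisonAux.kN e f :=
          KadisonAux.state_le_kN hunit harch _ hlin hpos hone f
        have h2 : (φ : V → ℝ) (-f) ≤ KadisonAux.kN e (-f) :=
          KadisonAux.state_le_kN hunit harch _ hlin hpos hone (-f)
        have h3 : (φ : V → ℝ) (-f) = -((φ : V → ℝ) f) :=
          map_neg (IsLinearMap.mk' _ hlin) f
        rw [h3] at h2
        have h4 := le_max_left (KadisonAux.kN e f) (KadisonAux.kN e (-f))
        have h5 := le_max_right (KadisonAux.kN e f) (KadisonAux.kN e (-f))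
        rw [← hm] at h4 h5
        exact abs_le.mpr ⟨by linarith, by linarith⟩
      have hSne : {x : ℝ | ∃ φ : K, x = |Δ f φ|}.Nonempty :=
        ⟨|Δ f ⟨⇑φL, hφK⟩|, ⟨⟨⇑φL, hφK⟩, rfl⟩⟩
      have hbdd : BddAbove {x : ℝ | ∃ φ : K, x = |Δ f φ|} := ⟨m, hbound⟩
      refine le_antisymm (csSup_le hSne hbound) (max_le ?_ ?_)
      · calc KadisonAux.kN e f = φL f := hφf.symm
          _ ≤ |Δ f ⟨⇑φL, hφK⟩| := le_abs_self _
          _ ≤ sSup {x : ℝ | ∃ φ : K, x = |Δ f φ|} := le_csSup hbdd ⟨_, rfl⟩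
      · calc KadisonAux.kN e (-f) = ψL (-f) := hψf.symm
          _ = -(ψL f) := map_neg ψL f
          _ ≤ |Δ f ⟨⇑ψL, hψK⟩| := neg_le_abs _
          _ ≤ sSup {x : ℝ | ∃ φ : K, x = |Δ f φ|} := le_csSup hbdd ⟨_, rfl⟩
    · -- order preservation in both directions
      intro f g
      constructor
      · intro hfg φ
        obtain ⟨hlin, hpos, hone⟩ := φ.2
        have h1 : (0 : V) ≤ g - f := sub_nonneg.mpr hfg
        have h2 := hpos _ h1
        have h3 : (φ : V → ℝ) (g - f) = (φ : V → ℝ) g - (φ : V → ℝ) f :=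
          map_sub (IsLinearMap.mk' _ hlin) g f
        rw [h3] at h2
        show (φ : V → ℝ) f ≤ (φ : V → ℝ) g
        linarith
      · intro hall
        obtain ⟨φL, hφd, hφh⟩ := KadisonAux.exists_dominated hunit harch he (f - g)
        have hφK : ⇑φL ∈ K := KadisonAux.dominated_is_state hunit harch he φL hφd
        have h1 := hall ⟨⇑φL, hφK⟩
        have h2 : KadisonAux.kN e (f - g) ≤ 0 := by
          rw [← hφh, map_sub]
          have : φL f ≤ φL g := h1
          linarith
        have h3 : f - g ≤ 0 := (KadisonAux.kN_nonpos_iff hunit harch he (f - g)).mpr h2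
        exact sub_nonpos.mp h3
    · -- density
      intro g hgc hgaff ε hε
      haveI : CompactSpace K :=
        isCompact_iff_compactSpace.mp
          (show IsCompact K from KadisonAux.isCompact_stateSet hunit harch)
      set F : K → (V → ℝ) × ℝ := fun φ => ((φ : V → ℝ), g φ + ε) with hF
      set G : K → (V → ℝ) × ℝ := fun φ => ((φ : V → ℝ), g φ - ε) with hG
      have hFc : Continuous F := continuous_subtype_val.prodMk (hgc.add continuous_const)
      have hGc : Continuous G := continuous_subtype_val.prodMk (hgc.sub continuous_const)
      have hA : IsCompact (Set.range F) := isCompact_range hFc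
      have hB : IsCompact (Set.range G) := isCompact_range hGc
      have hconvA : Convex ℝ (Set.range F) := by
        rintro - ⟨φ₁, rfl⟩ - ⟨φ₂, rfl⟩ a b ha hb hab
        have hχK : a • (φ₁ : V → ℝ) + b • (φ₂ : V → ℝ) ∈ K :=
          KadisonAux.stateSet_convex_mem e φ₁.2 φ₂.2 ha hb hab
        refine ⟨⟨_, hχK⟩, ?_⟩
        have hb' : b = 1 - a := by linarith
        have hgχ : g ⟨_, hχK⟩ = a * g φ₁ + b * g φ₂ := by
          subst hb'
          exact hgaff φ₁ φ₂ ⟨_, hχK⟩ a ha (by linarith) rfl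
        show ((a • (φ₁ : V → ℝ) + b • (φ₂ : V → ℝ)), g ⟨_, hχK⟩ + ε)
            = a • F φ₁ + b • F φ₂
        simp only [hF, Prod.smul_mk, Prod.mk_add_mk, smul_eq_mul]
        refine Prod.ext rfl ?_
        show g ⟨_, hχK⟩ + ε = a * (g φ₁ + ε) + b * (g φ₂ + ε)
        rw [hgχ]
        have : a * (g φ₁ + ε) + b * (g φ₂ + ε)
            = a * g φ₁ + b * g φ₂ + (a + b) * ε := by ring
        rw [this, hab, one_mul]
      have hconvB : Convex ℝ (Set.range G) := by
        rintro - ⟨φ₁, rfl⟩ - ⟨φ₂, rfl⟩ a b ha hb hab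
        have hχK : a • (φ₁ : V → ℝ) + b • (φ₂ : V → ℝ) ∈ K :=
          KadisonAux.stateSet_convex_mem e φ₁.2 φ₂.2 ha hb hab
        refine ⟨⟨_, hχK⟩, ?_⟩
        have hb' : b = 1 - a := by linarith
        have hgχ : g ⟨_, hχK⟩ = a * g φ₁ + b * g φ₂ := by
          subst hb'
          exact hgaff φ₁ φ₂ ⟨_, hχK⟩ a ha (by linarith) rfl
        show ((a • (φ₁ : V → ℝ) + b • (φ₂ : V → ℝ)), g ⟨_, hχK⟩ - ε)
            = a • G φ₁ + b • G φ₂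
        simp only [hG, Prod.smul_mk, Prod.mk_add_mk, smul_eq_mul]
        refine Prod.ext rfl ?_
        show g ⟨_, hχK⟩ - ε = a * (g φ₁ - ε) + b * (g φ₂ - ε)
        rw [hgχ]
        have : a * (g φ₁ - ε) + b * (g φ₂ - ε)
            = a * g φ₁ + b * g φ₂ - (a + b) * ε := by ring
        rw [this, hab, one_mul]
      have hdisj : Disjoint (Set.range F) (Set.range G) := by
        rw [Set.disjoint_left]
        rintro x ⟨φ₁, rfl⟩ ⟨φ₂, heq⟩
        have h1 : (φ₂ : V → ℝ) = (φ₁ : V → ℝ) := congrArg Prod.fst heq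
        have h2 : g φ₂ - ε = g φ₁ + ε := congrArg Prod.snd heq
        have h3 : φ₂ = φ₁ := Subtype.ext h1
        rw [h3] at h2
        linarith
      obtain ⟨L, u, v, hLu, huv, hLv⟩ :=
        geometric_hahn_banach_compact_closed hconvA hA hconvB hB.isClosed hdisj
      set s : ℝ := L (0, 1) with hs
      set ℓ : ((V → ℝ)) →L[ℝ] ℝ := L.comp (ContinuousLinearMap.inl ℝ (V → ℝ) ℝ) with hl
      have hLsplit : ∀ (x : V → ℝ) (t : ℝ), L (x, t) = ℓ x + t * s := by
        intro x t
        have hxt : (x, t) = ((x, (0:ℝ)) + t • ((0 : V → ℝ), (1:ℝ))) := by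
          rw [Prod.smul_mk, Prod.mk_add_mk, smul_zero, add_zero, smul_eq_mul, mul_one,
            zero_add]
        rw [hxt, map_add, map_smul, smul_eq_mul]
        rfl
      have key : ∀ φ : K, ℓ (φ : V → ℝ) + (g φ + ε) * s < u
          ∧ v < ℓ (φ : V → ℝ) + (g φ - ε) * s := by
        intro φ
        have h1 := hLu (F φ) (Set.mem_range_self φ)
        have h2 := hLv (G φ) (Set.mem_range_self φ)
        simp only [hF, hG] at h1 h2
        rw [hLsplit] at h1 h2
        exact ⟨h1, h2⟩
      obtain ⟨φ0L, hφ0d, -⟩ := KadisonAux.exists_dominated hunit harch he e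
      have hφ0K : ⇑φ0L ∈ K := KadisonAux.dominated_is_state hunit harch he φ0L hφ0d
      have hsneg : s < 0 := by
        obtain ⟨h1, h2⟩ := key ⟨⇑φ0L, hφ0K⟩
        nlinarith [h1, h2, huv, hε]
      have hsne : s ≠ 0 := ne_of_lt hsneg
      set c : ℝ := (u + v) / 2 with hc
      obtain ⟨f₁, hf₁⟩ := KadisonAux.clm_repr ℓ
      refine ⟨(c / s) • e - s⁻¹ • f₁, fun φ => ?_⟩
      obtain ⟨hlin, hpos, hone⟩ := φ.2
      have hΔval : Δ ((c / s) • e - s⁻¹ • f₁) φ = (c - ℓ (φ : V → ℝ)) / s := by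
        show (φ : V → ℝ) ((c / s) • e - s⁻¹ • f₁) = _
        have hL' : (φ : V → ℝ) ((c / s) • e - s⁻¹ • f₁)
            = (c / s) * (φ : V → ℝ) e - s⁻¹ * (φ : V → ℝ) f₁ := by
          rw [show (φ : V → ℝ) ((c / s) • e - s⁻¹ • f₁)
              = (IsLinearMap.mk' _ hlin) ((c / s) • e - s⁻¹ • f₁) from rfl,
            map_sub, map_smul, map_smul, smul_eq_mul, smul_eq_mul]
          rfl
        rw [hL', hone, mul_one, ← hf₁ (φ : V → ℝ) hlin]
        field_simp
      rw [hΔval]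
      obtain ⟨h1, h2⟩ := key φ
      have hu : ℓ (φ : V → ℝ) + (g φ + ε) * s < c := by
        rw [hc]; linarith
      have hv : c < ℓ (φ : V → ℝ) + (g φ - ε) * s := by
        rw [hc]; linarith
      have hlt1 : (c - ℓ (φ : V → ℝ)) / s < g φ + ε :=
        (div_lt_iff_of_neg hsneg).mpr (by linarith)
      have hlt2 : g φ - ε < (c - ℓ (φ : V → ℝ)) / s :=
        (lt_div_iff_of_neg hsneg).mpr (by linarith)
      exact abs_le.mpr ⟨by linarith, by linarith⟩
end

section
/- For a compact convex set K, let A(K) be the space of continuous affine functions on K; if A(K) contains a uniformly dense linear sublattice, then A(K) is itself a Banach lattice, and with order unit 1_K it is an MI-space (i.e., ‖f‖ ≤ 1 iff |f| ≤ 1_K). -/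
/-- Let `K` be a compact convex set and `A(K)` the space of continuous affine
real functions on `K` (with sup norm and the pointwise order). If `A(K)`
contains a uniformly dense linear sublattice, then `A(K)` is itself a
(Banach) lattice, and with order unit `1_K` it is an `MI`-space:
`‖f‖ ≤ 1` iff `|f| ≤ 1_K`. -/
theorem denseSublattice_implies_MI_space
    (E : Type*) [AddCommGroup E] [Module ℝ E] [TopologicalSpace E]
    (K : Set E) (hKcomp : IsCompact K) [CompactSpace ↥K] (hKconv : Convex ℝ K)
    (hKne : K.Nonempty)
    -- the continuous affine functions on K
    (A : Set C(K, ℝ))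
    (hA : A = {f : C(K, ℝ) | ∀ (x y z : K) (a : ℝ), 0 ≤ a → a ≤ 1 →
        (z : E) = a • (x : E) + (1 - a) • (y : E) →
        f z = a * f x + (1 - a) * f y})
    -- a uniformly dense linear sublattice L ⊆ A
    (L : Set C(K, ℝ)) (hLA : L ⊆ A)
    (hLlin : ∀ f g : C(K, ℝ), f ∈ L → g ∈ L → f + g ∈ L)
    (hLsmul : ∀ (a : ℝ) (f : C(K, ℝ)), f ∈ L → a • f ∈ L)
    (hLlat : ∀ f g : C(K, ℝ), f ∈ L → g ∈ L → ∃ h ∈ L,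
        f ≤ h ∧ g ≤ h ∧ ∀ k ∈ A, f ≤ k → g ≤ k → h ≤ k)
    (hLdense : A ⊆ closure L) :
    -- A(K) is a lattice: any two elements have a least upper bound in A
    (∀ f g : C(K, ℝ), f ∈ A → g ∈ A → ∃ h ∈ A,
        f ≤ h ∧ g ≤ h ∧ ∀ k ∈ A, f ≤ k → g ≤ k → h ≤ k) ∧
    -- with order unit 1_K it is an MI-space
    (∀ f : C(K, ℝ), f ∈ A → (‖f‖ ≤ 1 ↔ ∀ x : K, |f x| ≤ 1)) := by
  classical
  subst hA
  set A := {f : C(K, ℝ) | ∀ (x y z : K) (a : ℝ), 0 ≤ a → a ≤ 1 →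
        (z : E) = a • (x : E) + (1 - a) • (y : E) →
        f z = a * f x + (1 - a) * f y} with hA
  have haddconst : ∀ k ∈ A, ∀ c : ℝ, k + ContinuousMap.const (↥K) c ∈ A := by
    intro k hk c x y z a ha0 ha1 hz
    simp only [ContinuousMap.add_apply, ContinuousMap.const_apply, hk x y z a ha0 ha1 hz]
    ring
  have hnormpt : ∀ (u u' : C(K, ℝ)) (x : K), u x - u' x ≤ ‖u - u'‖ := by
    intro u u' x
    have := ContinuousMap.norm_coe_le_norm (u - u') x
    have := (abs_le.mp (by simpa [Real.norm_eq_abs] using this)).2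
    simpa using this
  -- key Lipschitz-type estimate for least upper bounds
  have key : ∀ u v u' v' h h' : C(K, ℝ),
      (u ≤ h ∧ v ≤ h ∧ ∀ k ∈ A, u ≤ k → v ≤ k → h ≤ k) →
      (u' ≤ h' ∧ v' ≤ h' ∧ h' ∈ A) →
      h ≤ h' + ContinuousMap.const (↥K) (‖u - u'‖ + ‖v - v'‖) := by
    intro u v u' v' h h' ⟨hu, hv, hle⟩ ⟨hu', hv', hA'⟩
    apply hle _ (haddconst _ hA' _)
    · rw [ContinuousMap.le_def]
      intro x
      simp only [ContinuousMap.add_apply, ContinuousMap.const_apply]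
      have h1 := hnormpt u u' x
      have h2 := ContinuousMap.le_def.mp hu' x
      nlinarith [norm_nonneg (v - v')]
    · rw [ContinuousMap.le_def]
      intro x
      simp only [ContinuousMap.add_apply, ContinuousMap.const_apply]
      have h1 := hnormpt v v' x
      have h2 := ContinuousMap.le_def.mp hv' x
      nlinarith [norm_nonneg (u - u')]
  constructor
  · -- the lattice property
    intro f g hf hg
    obtain ⟨fs, hfsL, hfs⟩ := mem_closure_iff_seq_limit.mp (hLdense hf)
    obtain ⟨gs, hgsL, hgs⟩ := mem_closure_iff_seq_limit.mp (hLdense hg)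
    have hchoice : ∀ n, ∃ h ∈ L, fs n ≤ h ∧ gs n ≤ h ∧
        ∀ k ∈ A, fs n ≤ k → gs n ≤ k → h ≤ k := fun n => hLlat _ _ (hfsL n) (hgsL n)
    choose hs hsL hs1 hs2 hs3 using hchoice
    have hdist : ∀ m n, dist (hs m) (hs n) ≤ dist (fs m) (fs n) + dist (gs m) (gs n) := by
      intro m n
      rw [ContinuousMap.dist_le (by positivity)]
      intro x
      have h1 := ContinuousMap.le_def.mp (key (fs m) (gs m) (fs n) (gs n) (hs m) (hs n)
        ⟨hs1 m, hs2 m, hs3 m⟩ ⟨hs1 n, hs2 n, hLA (hsL n)⟩) x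
      have h2 := ContinuousMap.le_def.mp (key (fs n) (gs n) (fs m) (gs m) (hs n) (hs m)
        ⟨hs1 n, hs2 n, hs3 n⟩ ⟨hs1 m, hs2 m, hLA (hsL m)⟩) x
      simp only [ContinuousMap.add_apply, ContinuousMap.const_apply] at h1 h2
      have e1 : ‖fs m - fs n‖ = dist (fs m) (fs n) := (dist_eq_norm _ _).symm
      have e2 : ‖gs m - gs n‖ = dist (gs m) (gs n) := (dist_eq_norm _ _).symm
      have e1' : ‖fs n - fs m‖ = dist (fs m) (fs n) := by
        rw [← e1, ← norm_neg]; congr 1; abel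
      have e2' : ‖gs n - gs m‖ = dist (gs m) (gs n) := by
        rw [← e2, ← norm_neg]; congr 1; abel
      rw [Real.dist_eq, abs_le]
      constructor <;> linarith
    have hfc : CauchySeq fs := hfs.cauchySeq
    have hgc : CauchySeq gs := hgs.cauchySeq
    have hsc : CauchySeq hs := by
      rw [Metric.cauchySeq_iff] at hfc hgc ⊢
      intro ε hε
      obtain ⟨N1, hN1⟩ := hfc (ε/2) (by linarith)
      obtain ⟨N2, hN2⟩ := hgc (ε/2) (by linarith)
      refine ⟨max N1 N2, fun m hm n hn => ?_⟩
      have := hdist m n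
      have := hN1 m (le_trans (le_max_left _ _) hm) n (le_trans (le_max_left _ _) hn)
      have := hN2 m (le_trans (le_max_right _ _) hm) n (le_trans (le_max_right _ _) hn)
      linarith
    obtain ⟨h, hh⟩ := cauchySeq_tendsto_of_complete hsc
    have heval : ∀ x : K, Filter.Tendsto (fun n => hs n x) Filter.atTop (nhds (h x)) :=
      fun x => ((continuous_eval_const x).tendsto h).comp hh
    have hfeval : ∀ x : K, Filter.Tendsto (fun n => fs n x) Filter.atTop (nhds (f x)) :=
      fun x => ((continuous_eval_const x).tendsto f).comp hfs
    have hgeval : ∀ x : K, Filter.Tendsto (fun n => gs n x) Filter.atTop (nhds (g x)) :=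
      fun x => ((continuous_eval_const x).tendsto g).comp hgs
    have hnorm0 : Filter.Tendsto (fun n => ‖fs n - f‖ + ‖gs n - g‖) Filter.atTop (nhds 0) := by
      have h1 := tendsto_iff_norm_sub_tendsto_zero.mp hfs
      have h2 := tendsto_iff_norm_sub_tendsto_zero.mp hgs
      simpa using h1.add h2
    refine ⟨h, ?_, ?_, ?_, ?_⟩
    · -- h ∈ A
      intro x y z a ha0 ha1 hz
      refine tendsto_nhds_unique (heval z) ?_
      have heq : (fun n => hs n z) = fun n => a * hs n x + (1 - a) * hs n y := by
        funext n; exact hLA (hsL n) x y z a ha0 ha1 hz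
      rw [heq]
      exact ((heval x).const_mul a).add ((heval y).const_mul (1 - a))
    · -- f ≤ h
      rw [ContinuousMap.le_def]
      intro x
      exact le_of_tendsto_of_tendsto (hfeval x) (heval x)
        (Filter.Eventually.of_forall fun n => ContinuousMap.le_def.mp (hs1 n) x)
    · -- g ≤ h
      rw [ContinuousMap.le_def]
      intro x
      exact le_of_tendsto_of_tendsto (hgeval x) (heval x)
        (Filter.Eventually.of_forall fun n => ContinuousMap.le_def.mp (hs2 n) x)
    · -- least
      intro k hk hfk hgk
      rw [ContinuousMap.le_def]
      intro x
      have hle : ∀ n, hs n x ≤ k x + (‖fs n - f‖ + ‖gs n - g‖) := by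
        intro n
        have hcmp : hs n ≤ k + ContinuousMap.const (↥K) (‖fs n - f‖ + ‖gs n - g‖) := by
          apply hs3 n _ (haddconst _ hk _)
          · rw [ContinuousMap.le_def]
            intro y
            simp only [ContinuousMap.add_apply, ContinuousMap.const_apply]
            have h1 := hnormpt (fs n) f y
            have h2 := ContinuousMap.le_def.mp hfk y
            nlinarith [norm_nonneg (gs n - g)]
          · rw [ContinuousMap.le_def]
            intro y
            simp only [ContinuousMap.add_apply, ContinuousMap.const_apply]
            have h1 := hnormpt (gs n) g y
            have h2 := ContinuousMap.le_def.mp hgk y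
            nlinarith [norm_nonneg (fs n - f)]
        have := ContinuousMap.le_def.mp hcmp x
        simpa using this
      have hlim : Filter.Tendsto (fun n => k x + (‖fs n - f‖ + ‖gs n - g‖))
          Filter.atTop (nhds (k x)) := by
        simpa using (tendsto_const_nhds (x := k x) (f := Filter.atTop)).add hnorm0
      exact le_of_tendsto_of_tendsto (heval x) hlim (Filter.Eventually.of_forall hle)
  · -- MI-space property
    intro f _
    rw [ContinuousMap.norm_le f zero_le_one]
    simp [Real.norm_eq_abs]
end
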